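/- Let (z, w) be a unit vector with entries in Z[1/√2, i] with sde(|z|², √2) ≥ 4. Then for each s ∈ {−1, 0, 1} there exists k ∈ {0, 1, 2, 3} such that sde(|(z + wω^k)/√2|², √2) − sde(|z|², √2) = s. -/

import Mathlib

noncomputable section

open Complex

/-- The eighth root of unity ω = e^{iπ/4}. -/
def omg : ℂ := Complex.exp (Real.pi * Complex.I / 4)

/-- √2 as a complex number. -/
def rt2 : ℂ := (Real.sqrt 2 : ℝ)

/-- Membership in the ring Z[ω] = {a + bω + cω² + dω³ : a,b,c,d ∈ ℤ}. -/
def Zomega (z : ℂ) : Prop :=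
  ∃ a b c d : ℤ, z = a + b * omg + c * omg ^ 2 + d * omg ^ 3

/-- Membership in the ring Z[1/√2, i] = {u/(√2)^n : u ∈ Z[ω], n ∈ ℕ}. -/
def ZRoot2i (z : ℂ) : Prop :=
  ∃ u : ℂ, Zomega u ∧ ∃ n : ℕ, z = u / rt2 ^ n

/-- `b` divides `z` within the ring Z[ω]. -/
def ZDvd (b z : ℂ) : Prop := ∃ q : ℂ, Zomega q ∧ z = b * q

/-- `k` is the greatest dividing exponent of base `b` with respect to `z`:
`b^k` divides `z` in Z[ω], while `b^(k+1)` does not. -/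
def IsGde (b z : ℂ) (k : ℕ) : Prop := ZDvd (b ^ k) z ∧ ¬ ZDvd (b ^ (k + 1)) z

/-- `k` is the smallest denominator exponent of base √2 with respect to `z`:
the smallest integer `k` such that `z·(√2)^k ∈ Z[ω]`. -/
def IsSde (z : ℂ) (k : ℤ) : Prop :=
  Zomega (z * rt2 ^ k) ∧ ∀ j : ℤ, Zomega (z * rt2 ^ j) → k ≤ j

/-! Let `n = sde(|z|²) ≥ 4`, so that `|z|²·√2ⁿ = x` and `|w|²·√2ⁿ = √2ⁿ - x` lie in `ℤ[√2]`
with `x` not divisible by `√2`, i.e. `x = p + q√2` with `p` odd. The element `u = z w̄ √2ⁿ`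
lies in `ℤ[ω]`, because `u ū = x (√2ⁿ - x)` and `√2` is a prime of `ℤ[ω]` fixed by
conjugation. Expanding,
`|(z + w ωᵏ)/√2|² · √2ⁿ⁺² = √2ⁿ + (u ω̄ᵏ + conj (u ω̄ᵏ))`,
so if the trace `u ω̄ᵏ + conj (u ω̄ᵏ)` has `√2`-adic valuation `j < n`, the new sde is
`n + 2 - j`. That valuation, for `j ≤ 3`, is determined by `u` modulo `4`, and
`u ū ≡ -x² (mod 4)` because `4 ∣ √2ⁿ`; a finite check modulo `4` shows that every
`j ∈ {1, 2, 3}` is attained by one of the four rotations `u ω̄ᵏ`. -/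

open ComplexConjugate

lemma rt2_ne_zero : rt2 ≠ 0 := by
  simp [rt2]

lemma rt2_sq : rt2 ^ 2 = 2 := by
  rw [rt2, ← ofReal_pow, Real.sq_sqrt zero_le_two, ofReal_ofNat]

lemma conj_rt2 : conj rt2 = rt2 := conj_ofReal _

lemma omg_eq_exp : omg = exp ((Real.pi / 4 : ℝ) * I) := by
  rw [omg]; push_cast; ring_nf

lemma omg_sq : omg ^ 2 = I := by
  rw [omg, ← exp_nat_mul]
  convert exp_pi_div_two_mul_I using 2
  push_cast; ring

lemma omg_pow_four : omg ^ 4 = -1 := by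
  rw [show omg ^ 4 = (omg ^ 2) ^ 2 by ring, omg_sq, I_sq]

lemma conj_omg_mul_omg : conj omg * omg = 1 := by
  rw [conj_mul', omg_eq_exp, norm_exp_ofReal_mul_I]; simp

lemma conj_omg : conj omg = -omg ^ 3 := by
  linear_combination -omg ^ 3 * conj_omg_mul_omg + conj omg * omg_pow_four

lemma omg_sub_omg_pow_three : omg - omg ^ 3 = rt2 := by
  rw [sub_eq_add_neg, ← conj_omg, add_conj, omg_eq_exp, exp_ofReal_mul_I_re,
    Real.cos_pi_div_four, rt2]
  push_cast; ring

lemma two_mul_omg : 2 * omg = rt2 * (1 + I) := by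
  linear_combination (1 + I) * omg_sub_omg_pow_three + (omg + I * omg) * omg_sq + omg * I_sq

def ofCoords (a b c d : ℤ) : ℂ := a + b * omg + c * omg ^ 2 + d * omg ^ 3

lemma zomega_iff {z : ℂ} : Zomega z ↔ ∃ a b c d, z = ofCoords a b c d := Iff.rfl

lemma ofCoords_mul (a b c d a' b' c' d' : ℤ) :
    ofCoords a b c d * ofCoords a' b' c' d' =
      ofCoords (a * a' - b * d' - c * c' - d * b') (a * b' + b * a' - c * d' - d * c')
        (a * c' + b * b' + c * a' - d * d') (a * d' + b * c' + c * b' + d * a') := by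
  simp only [ofCoords]; push_cast
  linear_combination (b * d' + c * c' + d * b' + (c * d' + d * c') * omg + d * d' * omg ^ 2) *
    omg_pow_four

lemma conj_ofCoords (a b c d : ℤ) : conj (ofCoords a b c d) = ofCoords a (-d) (-c) (-b) := by
  simp only [ofCoords, map_add, map_mul, map_pow, map_intCast, conj_omg]; push_cast
  linear_combination (c * omg ^ 2 - d * omg * (omg ^ 4 - 1)) * omg_pow_four

lemma rt2_mul_ofCoords (a b c d : ℤ) :
    rt2 * ofCoords a b c d = ofCoords (b - d) (a + c) (b + d) (c - a) := by
  rw [← omg_sub_omg_pow_three]; simp only [ofCoords]; push_cast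
  linear_combination (d - b - c * omg - d * omg ^ 2) * omg_pow_four

lemma ofCoords_mul_conj_omg (a b c d : ℤ) :
    ofCoords a b c d * conj omg = ofCoords b c d (-a) := by
  rw [conj_omg]; simp only [ofCoords]; push_cast
  linear_combination (-(b + c * omg + d * omg ^ 2)) * omg_pow_four

def zOmega : Subring ℂ where
  carrier := {z | Zomega z}
  zero_mem' := ⟨0, 0, 0, 0, by simp⟩
  one_mem' := ⟨1, 0, 0, 0, by simp⟩
  add_mem' := by
    rintro _ _ ⟨a, b, c, d, rfl⟩ ⟨a', b', c', d', rfl⟩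
    exact ⟨a + a', b + b', c + c', d + d', by push_cast; ring⟩
  neg_mem' := by
    rintro _ ⟨a, b, c, d, rfl⟩
    exact ⟨-a, -b, -c, -d, by push_cast; ring⟩
  mul_mem' := by
    rintro _ _ ⟨a, b, c, d, rfl⟩ ⟨a', b', c', d', rfl⟩
    exact ⟨_, _, _, _, ofCoords_mul a b c d a' b' c' d'⟩

lemma rt2_mem_zOmega : rt2 ∈ zOmega :=
  ⟨0, 1, 0, -1, by rw [← omg_sub_omg_pow_three]; push_cast; ring⟩

lemma conj_mem_zOmega {z : ℂ} (hz : z ∈ zOmega) : conj z ∈ zOmega := by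
  obtain ⟨a, b, c, d, rfl⟩ := zomega_iff.1 hz
  exact ⟨_, _, _, _, conj_ofCoords a b c d⟩

lemma rt2_mul_self : rt2 * rt2 = ((2 : ℤ) : ℂ) := by
  rw [← sq, rt2_sq]; norm_num

def ofZsqrtd : ℤ√2 →+* ℂ := Zsqrtd.lift ⟨rt2, rt2_mul_self⟩

lemma ofZsqrtd_apply (x : ℤ√2) : ofZsqrtd x = x.re + x.im * rt2 := rfl

lemma ofZsqrtd_sqrtd : ofZsqrtd Zsqrtd.sqrtd = rt2 := by
  simp [ofZsqrtd_apply]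

lemma ofZsqrtd_injective : Function.Injective ofZsqrtd := by
  refine Zsqrtd.lift_injective _ fun n h => Int.sq_ne_two_mod_four n ?_
  rw [← h]; rfl

lemma conj_ofZsqrtd (x : ℤ√2) : conj (ofZsqrtd x) = ofZsqrtd x := by
  simp [ofZsqrtd_apply, conj_rt2]

lemma ofZsqrtd_eq_ofCoords (x : ℤ√2) : ofZsqrtd x = ofCoords x.re x.im 0 (-x.im) := by
  rw [ofZsqrtd_apply, ofCoords, ← omg_sub_omg_pow_three]; push_cast; ring

lemma ofZsqrtd_mem_zOmega (x : ℤ√2) : ofZsqrtd x ∈ zOmega :=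
  ⟨_, _, _, _, ofZsqrtd_eq_ofCoords x⟩

lemma two_mul_ofCoords (a b c d : ℤ) :
    2 * ofCoords a b c d = ofZsqrtd ⟨2 * a, b - d⟩ + I * ofZsqrtd ⟨2 * c, b + d⟩ := by
  have h3 : omg ^ 3 = I * omg := by rw [pow_succ, omg_sq]
  simp only [ofCoords, ofZsqrtd_apply, h3, omg_sq]; push_cast
  linear_combination (b + I * d) * two_mul_omg + d * rt2 * I_sq

-- `ofZsqrtd` takes real values, so `A + I B = 0` splits into `A = 0` and `B = 0`.
lemma ofCoords_eq_zero {a b c d : ℤ} (h : ofCoords a b c d = 0) :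
    a = 0 ∧ b = 0 ∧ c = 0 ∧ d = 0 := by
  set A := ofZsqrtd ⟨2 * a, b - d⟩
  set B := ofZsqrtd ⟨2 * c, b + d⟩
  have h1 : A + I * B = 0 := by rw [← two_mul_ofCoords, h, mul_zero]
  have h2 : A - I * B = 0 := by
    simpa [conj_ofZsqrtd, A, B, sub_eq_add_neg] using congrArg conj h1
  have hA : A = ofZsqrtd 0 := by rw [map_zero]; linear_combination (h1 + h2) / 2
  have hB : B = ofZsqrtd 0 := by
    rw [map_zero]; linear_combination (-I) * (h1 - h2) / 2 + B * I_sq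
  have eA := Zsqrtd.ext_iff.1 (ofZsqrtd_injective hA)
  have eB := Zsqrtd.ext_iff.1 (ofZsqrtd_injective hB)
  simp only [Zsqrtd.re_zero, Zsqrtd.im_zero] at eA eB
  omega

lemma ofCoords_injective {a b c d a' b' c' d' : ℤ}
    (h : ofCoords a b c d = ofCoords a' b' c' d') : a = a' ∧ b = b' ∧ c = c' ∧ d = d' := by
  have := ofCoords_eq_zero (a := a - a') (b := b - b') (c := c - c') (d := d - d')
    (by rw [← sub_eq_zero.2 h]; simp only [ofCoords]; push_cast; ring)
  omega

def normSqOfCoords (a b c d : ℤ) : ℤ√2 :=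
  ⟨a ^ 2 + b ^ 2 + c ^ 2 + d ^ 2, a * b + b * c + c * d - d * a⟩

lemma ofCoords_mul_conj (a b c d : ℤ) :
    ofCoords a b c d * conj (ofCoords a b c d) = ofZsqrtd (normSqOfCoords a b c d) := by
  rw [conj_ofCoords, ofCoords_mul, ofZsqrtd_eq_ofCoords, normSqOfCoords]; congr 1 <;> ring

lemma ofCoords_add_conj (a b c d : ℤ) :
    ofCoords a b c d + conj (ofCoords a b c d) = ofZsqrtd ⟨2 * a, b - d⟩ := by
  rw [conj_ofCoords, ofZsqrtd_eq_ofCoords]; simp only [ofCoords]; push_cast; ring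

lemma exists_ofZsqrtd_eq {X : ℂ} (hX : X ∈ zOmega) (hconj : conj X = X) :
    ∃ x : ℤ√2, ofZsqrtd x = X := by
  obtain ⟨a, b, c, d, rfl⟩ := zomega_iff.1 hX
  rw [conj_ofCoords] at hconj
  obtain ⟨-, h1, h2, -⟩ := ofCoords_injective hconj
  refine ⟨⟨a, b⟩, ?_⟩
  rw [ofZsqrtd_eq_ofCoords]; show ofCoords a b 0 (-b) = _; congr 1 <;> omega

lemma zdvd_rt2_ofCoords_iff {a b c d : ℤ} :
    ZDvd rt2 (ofCoords a b c d) ↔ Even (a + c) ∧ Even (b + d) := by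
  constructor
  · rintro ⟨_, hq, h⟩
    obtain ⟨a', b', c', d', rfl⟩ := zomega_iff.1 hq
    rw [rt2_mul_ofCoords] at h
    obtain ⟨rfl, rfl, rfl, rfl⟩ := ofCoords_injective h
    exact ⟨⟨b', by ring⟩, ⟨c', by ring⟩⟩
  · rintro ⟨⟨k, hk⟩, ⟨l, hl⟩⟩
    refine ⟨ofCoords (l - d) k l (k - a), ⟨_, _, _, _, rfl⟩, ?_⟩
    rw [rt2_mul_ofCoords]; congr 1 <;> omega

lemma zdvd_rt2_ofZsqrtd_iff {x : ℤ√2} : ZDvd rt2 (ofZsqrtd x) ↔ Even x.re := by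
  rw [ofZsqrtd_eq_ofCoords, zdvd_rt2_ofCoords_iff]; simp

lemma even_of_zdvd_two_ofZsqrtd {x : ℤ√2} (h : ZDvd 2 (ofZsqrtd x)) :
    Even x.re ∧ Even x.im := by
  obtain ⟨_, hq, h⟩ := h
  obtain ⟨a, b, c, d, rfl⟩ := zomega_iff.1 hq
  rw [ofZsqrtd_eq_ofCoords,
    show 2 * ofCoords a b c d = ofCoords (2 * a) (2 * b) (2 * c) (2 * d) by
      simp only [ofCoords]; push_cast; ring] at h
  obtain ⟨h1, h2, -, -⟩ := ofCoords_injective h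
  exact ⟨⟨a, by omega⟩, ⟨b, by omega⟩⟩

lemma zdvd_rt2_of_zdvd_two_mul_conj {z : ℂ} (hz : z ∈ zOmega) (h : ZDvd 2 (z * conj z)) :
    ZDvd rt2 z := by
  obtain ⟨a, b, c, d, rfl⟩ := zomega_iff.1 hz
  rw [ofCoords_mul_conj] at h
  obtain ⟨h1, h2⟩ := even_of_zdvd_two_ofZsqrtd h
  rw [zdvd_rt2_ofCoords_iff]
  simp only [normSqOfCoords, parity_simps] at h1 h2 ⊢
  tauto

lemma mem_zOmega_of_mul_rt2_pow {U : ℂ} {t : ℕ} (ht : U * rt2 ^ t ∈ zOmega)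
    (hU : U * conj U ∈ zOmega) : U ∈ zOmega := by
  induction t with
  | zero => simpa using ht
  | succ t ih =>
    have hnorm : U * rt2 ^ (t + 1) * conj (U * rt2 ^ (t + 1)) = 2 * (U * conj U * 2 ^ t) := by
      rw [map_mul, map_pow, conj_rt2, show U * rt2 ^ (t + 1) * (conj U * rt2 ^ (t + 1)) =
        U * conj U * (rt2 ^ 2) ^ (t + 1) by ring, rt2_sq]
      ring
    obtain ⟨q, hq, h⟩ := zdvd_rt2_of_zdvd_two_mul_conj ht
      ⟨_, Subring.mul_mem _ hU (Subring.pow_mem _ (natCast_mem _ 2) t), hnorm⟩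
    refine ih ?_
    rwa [mul_left_cancel₀ rt2_ne_zero (by rw [← h]; ring : rt2 * (U * rt2 ^ t) = rt2 * q)]

lemma mem_zOmega_mul_conj_mul_rt2_pow {z w : ℂ} (hz : ZRoot2i z) (hw : ZRoot2i w) {n : ℕ}
    (hzz : z * conj z * rt2 ^ n ∈ zOmega) (hww : w * conj w * rt2 ^ n ∈ zOmega) :
    z * conj w * rt2 ^ n ∈ zOmega := by
  obtain ⟨u, hu, mz, rfl⟩ := hz
  obtain ⟨v, hv, mw, rfl⟩ := hw
  refine mem_zOmega_of_mul_rt2_pow (t := mz + mw) ?_ ?_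
  · convert Subring.mul_mem _ (Subring.mul_mem _ hu (conj_mem_zOmega hv))
      (Subring.pow_mem _ rt2_mem_zOmega n) using 1
    simp only [map_div₀, map_pow, conj_rt2]
    field_simp [rt2_ne_zero]
    ring
  · convert Subring.mul_mem _ hzz hww using 1
    simp only [map_mul, map_pow, conj_rt2, conj_conj]; ring

lemma isSde_iff {c : ℂ} {n : ℕ} :
    IsSde c n ↔ c * rt2 ^ n ∈ zOmega ∧ ¬ ZDvd rt2 (c * rt2 ^ n) := by
  simp only [IsSde, zpow_natCast]
  constructor
  · rintro ⟨hc, hmin⟩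
    refine ⟨hc, fun ⟨q, hq, h⟩ => ?_⟩
    have hq' : c * rt2 ^ ((n : ℤ) - 1) = q := by
      rw [zpow_sub_one₀ rt2_ne_zero, zpow_natCast, ← mul_assoc, h]; field_simp [rt2_ne_zero]
    have := hmin _ (hq' ▸ hq)
    omega
  · rintro ⟨hc, hndvd⟩
    refine ⟨hc, fun j hj => ?_⟩
    by_contra! hlt
    obtain ⟨i, hi⟩ : ∃ i : ℕ, (n : ℤ) = j + i + 1 := ⟨(n - j - 1).toNat, by omega⟩
    refine hndvd ⟨c * rt2 ^ j * rt2 ^ i,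
      Subring.mul_mem _ hj (Subring.pow_mem _ rt2_mem_zOmega i), ?_⟩
    rw [← zpow_natCast, hi, zpow_add₀ rt2_ne_zero, zpow_add₀ rt2_ne_zero, zpow_natCast, zpow_one]
    ring

lemma exists_ofZsqrtd_eq_of_isSde {c : ℂ} (hc : conj c = c) {n : ℕ} (hn : IsSde c n) :
    ∃ x : ℤ√2, ofZsqrtd x = c * rt2 ^ n ∧ Odd x.re := by
  obtain ⟨hX, hndvd⟩ := isSde_iff.1 hn
  obtain ⟨x, hx⟩ := exists_ofZsqrtd_eq hX (by rw [map_mul, map_pow, conj_rt2, hc])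
  rw [← hx, zdvd_rt2_ofZsqrtd_iff, Int.not_even_iff_odd] at hndvd
  exact ⟨x, hx, hndvd⟩

lemma isSde_of_mul_rt2_pow_eq {c : ℂ} {N : ℕ} {r : ℤ√2} (hr : Odd r.re)
    (h : c * rt2 ^ N = ofZsqrtd r) : IsSde c N := by
  rw [isSde_iff, h, zdvd_rt2_ofZsqrtd_iff, Int.not_even_iff_odd]
  exact ⟨ofZsqrtd_mem_zOmega r, hr⟩

open Zsqrtd in
lemma odd_re_add_sqrtd_pow {r : ℤ√2} (hr : Odd r.re) {i : ℕ} (hi : i ≠ 0) :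
    Odd (r + sqrtd ^ i).re := by
  obtain ⟨i, rfl⟩ := Nat.exists_eq_succ_of_ne_zero hi
  rw [re_add, pow_succ', re_mul, re_sqrtd, im_sqrtd]
  exact hr.add_even ⟨(sqrtd ^ i).im, by ring⟩

open Zsqrtd in
lemma four_dvd_mul_sqrtd_pow_sub_add_sq (x : ℤ√2) {n : ℕ} (hn : 4 ≤ n) :
    (4 : ℤ√2) ∣ x * (sqrtd ^ n - x) + x ^ 2 := by
  refine ⟨x * sqrtd ^ (n - 4), ?_⟩
  rw [show sqrtd ^ n = (4 : ℤ√2) * sqrtd ^ (n - 4) by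
    rw [show (4 : ℤ√2) = sqrtd ^ 4 by ext <;> simp [pow_succ], ← pow_add,
      Nat.add_sub_cancel' hn]]
  ring

/-- The `√2`-adic valuation of `2A + B√2 ∈ ℤ[√2]`, capped at `4`, as a function of `A` and `B`
modulo `4`. -/
def sqrtTwoValMod4 (A B : ZMod 4) : ℕ :=
  if B.val % 2 = 1 then 1 else if A.val % 2 = 1 then 2 else if B.val = 2 then 3 else 4

open Zsqrtd in
lemma exists_eq_sqrtd_pow_mul {A B : ℤ} {j : ℕ} (h : sqrtTwoValMod4 A B = j) (hj : j ≤ 3) :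
    ∃ r : ℤ√2, Odd r.re ∧ (⟨2 * A, B⟩ : ℤ√2) = sqrtd ^ j * r := by
  have hA := ZMod.val_intCast (n := 4) A
  have hB := ZMod.val_intCast (n := 4) B
  unfold sqrtTwoValMod4 at h
  split_ifs at h <;> subst h
  · exact ⟨⟨B, A⟩, Int.odd_iff.2 (by dsimp only; omega), by ext <;> simp⟩
  · exact ⟨⟨A, B / 2⟩, Int.odd_iff.2 (by dsimp only; omega), by ext <;> simp [pow_succ]; omega⟩
  · exact ⟨⟨B / 2, A / 2⟩, Int.odd_iff.2 (by dsimp only; omega),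
      by ext <;> simp [pow_succ] <;> omega⟩
  · omega

-- `a + bω + cω² + dω³` has norm `≡ -(p + q√2)²` modulo `4`, with `p` odd; the four pairs
-- listed are `(A, B)` for the traces `2A + B√2` of its products with `ω̄ᵏ`, `k = 0, …, 3`.
lemma mem_sqrtTwoValMod4_rotations : ∀ a b c d p q : ZMod 4, p.val % 2 = 1 →
    a ^ 2 + b ^ 2 + c ^ 2 + d ^ 2 + (p * p + 2 * q * q) = 0 →
    a * b + b * c + c * d - d * a + (p * q + q * p) = 0 →
    ∀ j ∈ [1, 2, 3], j ∈ [sqrtTwoValMod4 a (b - d), sqrtTwoValMod4 b (c - -a),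
      sqrtTwoValMod4 c (d - -b), sqrtTwoValMod4 d (-a - -c)] := by
  decide

lemma exists_rotation_add_conj_eq (a b c d : ℤ) {x : ℤ√2} (hx : Odd x.re)
    (h : (4 : ℤ√2) ∣ normSqOfCoords a b c d + x ^ 2) {j : ℕ} (hj : j ∈ [1, 2, 3]) :
    ∃ k ≤ 3, ∃ r : ℤ√2, Odd r.re ∧
      ofCoords a b c d * conj omg ^ k + conj (ofCoords a b c d * conj omg ^ k) =
        ofZsqrtd (Zsqrtd.sqrtd ^ j * r) := by
  have of_rotation : ∀ k ≤ 3, ∀ a' b' c' d' : ℤ,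
      ofCoords a b c d * conj omg ^ k = ofCoords a' b' c' d' →
      j = sqrtTwoValMod4 a' ((b' - d' : ℤ) : ZMod 4) →
      ∃ k ≤ 3, ∃ r : ℤ√2, Odd r.re ∧
        ofCoords a b c d * conj omg ^ k + conj (ofCoords a b c d * conj omg ^ k) =
          ofZsqrtd (Zsqrtd.sqrtd ^ j * r) := by
    intro k hk a' b' c' d' hrot hval
    obtain ⟨r, hr, he⟩ := exists_eq_sqrtd_pow_mul hval.symm (by simp at hj; omega)
    exact ⟨k, hk, r, hr, by rw [hrot, ofCoords_add_conj, he]⟩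
  obtain ⟨h1, h2⟩ := (Zsqrtd.intCast_dvd 4 _).1 (by exact_mod_cast h)
  simp only [normSqOfCoords, Zsqrtd.re_add, Zsqrtd.im_add, sq x, Zsqrtd.re_mul,
    Zsqrtd.im_mul] at h1 h2
  have hp := ZMod.val_intCast (n := 4) x.re
  have hmod := mem_sqrtTwoValMod4_rotations a b c d x.re x.im
    (by have := Int.odd_iff.1 hx; omega)
    (by exact_mod_cast (ZMod.intCast_zmod_eq_zero_iff_dvd _ 4).2 h1)
    (by exact_mod_cast (ZMod.intCast_zmod_eq_zero_iff_dvd _ 4).2 h2) j hj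
  simp only [List.mem_cons, List.not_mem_nil, or_false] at hmod
  rcases hmod with h | h | h | h
  · exact of_rotation 0 (by norm_num) a b c d (by rw [pow_zero, mul_one]) (by exact_mod_cast h)
  · exact of_rotation 1 (by norm_num) b c d (-a) (by rw [pow_one, ofCoords_mul_conj_omg])
      (by exact_mod_cast h)
  · exact of_rotation 2 (by norm_num) c d (-a) (-b)
      (by rw [sq, ← mul_assoc, ofCoords_mul_conj_omg, ofCoords_mul_conj_omg])
      (by exact_mod_cast h)
  · exact of_rotation 3 (by norm_num) d (-a) (-b) (-c)
      (by rw [pow_succ, sq, ← mul_assoc, ← mul_assoc, ofCoords_mul_conj_omg,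
        ofCoords_mul_conj_omg, ofCoords_mul_conj_omg])
      (by exact_mod_cast h)

lemma mul_conj_shift_mul_rt2_pow {z w : ℂ} (hunit : z * conj z + w * conj w = 1) (k n : ℕ) :
    (z + w * omg ^ k) / rt2 * conj ((z + w * omg ^ k) / rt2) * rt2 ^ (n + 2) =
      rt2 ^ n + (z * conj w * rt2 ^ n * conj omg ^ k +
        conj (z * conj w * rt2 ^ n * conj omg ^ k)) := by
  have hω : conj omg ^ k * omg ^ k = 1 := by rw [← mul_pow, conj_omg_mul_omg, one_pow]
  simp only [map_mul, map_add, map_div₀, map_pow, conj_conj, conj_rt2]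
  field_simp [rt2_ne_zero]
  linear_combination rt2 ^ n * rt2 ^ 2 * hunit + rt2 ^ n * rt2 ^ 2 * w * conj w * hω

lemma isSde_shift {z w : ℂ} (hunit : z * conj z + w * conj w = 1) {n j k : ℕ} (hjn : j < n)
    {r : ℤ√2} (hr : Odd r.re)
    (hV : z * conj w * rt2 ^ n * conj omg ^ k + conj (z * conj w * rt2 ^ n * conj omg ^ k) =
      ofZsqrtd (Zsqrtd.sqrtd ^ j * r)) :
    IsSde ((z + w * omg ^ k) / rt2 * conj ((z + w * omg ^ k) / rt2)) (n + 2 - j : ℕ) := by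
  refine isSde_of_mul_rt2_pow_eq (odd_re_add_sqrtd_pow hr (by omega : n - j ≠ 0)) ?_
  apply mul_right_cancel₀ (pow_ne_zero j rt2_ne_zero)
  rw [mul_assoc, ← pow_add, Nat.sub_add_cancel (by omega), mul_conj_shift_mul_rt2_pow hunit, hV,
    map_add, map_mul, map_pow, map_pow, ofZsqrtd_sqrtd,
    show rt2 ^ n = rt2 ^ (n - j) * rt2 ^ j by rw [← pow_add, Nat.sub_add_cancel hjn.le]]
  ring

/-- For a unit vector (z, w) over Z[1/√2, i] with sde(|z|², √2) ≥ 4, each shift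
s ∈ {−1, 0, 1} of sde(|·|²) is achieved by some k ∈ {0, 1, 2, 3}. -/
theorem stmt12 (z w : ℂ) (hz : ZRoot2i z) (hw : ZRoot2i w)
    (hunit : z * (starRingEnd ℂ) z + w * (starRingEnd ℂ) w = 1)
    (n : ℤ) (hn : IsSde (z * (starRingEnd ℂ) z) n) (h4 : 4 ≤ n)
    (s : ℤ) (hs : s ∈ ({-1, 0, 1} : Set ℤ)) :
    ∃ k : ℕ, k ≤ 3 ∧ ∃ n' : ℤ,
      IsSde (((z + w * omg ^ k) / rt2) * (starRingEnd ℂ) ((z + w * omg ^ k) / rt2)) n' ∧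
      n' - n = s := by
  lift n to ℕ using by omega
  obtain ⟨x, hx, hx_odd⟩ := exists_ofZsqrtd_eq_of_isSde (by simp [mul_comm]) hn
  have hy : w * conj w * rt2 ^ n = ofZsqrtd (Zsqrtd.sqrtd ^ n - x) := by
    rw [map_sub, map_pow, ofZsqrtd_sqrtd, hx]; linear_combination rt2 ^ n * hunit
  obtain ⟨a, b, c, d, hU⟩ := zomega_iff.1 <| mem_zOmega_mul_conj_mul_rt2_pow hz hw
    (hx ▸ ofZsqrtd_mem_zOmega x) (hy ▸ ofZsqrtd_mem_zOmega _)
  have hnorm : normSqOfCoords a b c d = x * (Zsqrtd.sqrtd ^ n - x) := by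
    apply ofZsqrtd_injective
    rw [← ofCoords_mul_conj, ← hU, map_mul ofZsqrtd, hx, ← hy]
    simp only [map_mul, map_pow, conj_rt2, conj_conj]; ring
  obtain ⟨j, hj, rfl⟩ : ∃ j : ℕ, j ∈ [1, 2, 3] ∧ s = 2 - (j : ℤ) := by
    simp only [Set.mem_insert_iff, Set.mem_singleton_iff] at hs
    rcases hs with rfl | rfl | rfl
    exacts [⟨3, by simp⟩, ⟨2, by simp⟩, ⟨1, by simp⟩]
  obtain ⟨k, hk, r, hr, hV⟩ := exists_rotation_add_conj_eq a b c d hx_odd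
    (hnorm ▸ four_dvd_mul_sqrtd_pow_sub_add_sq x (by omega)) hj
  simp only [List.mem_cons, List.not_mem_nil, or_false] at hj
  exact ⟨k, hk, (n + 2 - j : ℕ), isSde_shift hunit (by omega) hr (by rwa [hU]), by omega⟩
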